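/- arXiv:1607.02000 — 5 statements merged into one kernel-verified Lean document; each statement's English description precedes it below -/
import Mathlib

section
/- Let G be a finite group with trivial-intersection Sylow p-subgroups, Q a Sylow p-subgroup, and x ∈ Q \ {1}. Then the intersection of the G-conjugacy class of x with Q equals the N_G(Q)-conjugacy class of x, i.e., x^G ∩ Q = x^{N_G(Q)}. -/
/-! If `c * x * c⁻¹` lies in `Q`, it is a nontrivial element of both `Q` and `c • Q`, so the
trivial-intersection hypothesis forces `c • Q = Q`, i.e. `c ∈ N_G(Q)`. -/

namespace Sylow

variable {G : Type*} [Group G] {p : ℕ}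

theorem eq_of_mem_of_mem_of_ne_one_of_inf_eq_bot
    (hTI : ∀ Q₁ Q₂ : Sylow p G, (Q₁ : Subgroup G) ≠ Q₂ → (Q₁ : Subgroup G) ⊓ Q₂ = ⊥)
    {P Q : Sylow p G} {y : G} (hyP : y ∈ P) (hyQ : y ∈ Q) (hy1 : y ≠ 1) : P = Q := by
  by_contra hne
  have hy : y ∈ (P : Subgroup G) ⊓ Q := ⟨hyP, hyQ⟩
  rw [hTI P Q fun h => hne (Sylow.ext h)] at hy
  exact hy1 hy

theorem mem_normalizer_of_conj_mem_of_inf_eq_bot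
    (hTI : ∀ Q₁ Q₂ : Sylow p G, (Q₁ : Subgroup G) ≠ Q₂ → (Q₁ : Subgroup G) ⊓ Q₂ = ⊥)
    {Q : Sylow p G} {x c : G} (hx : x ∈ Q) (hx1 : x ≠ 1) (hcx : c * x * c⁻¹ ∈ Q) :
    c ∈ Subgroup.normalizer ((Q : Subgroup G) : Set G) := by
  have hcxQ : c * x * c⁻¹ ∈ c • Q :=
    Subgroup.smul_mem_pointwise_smul x (MulAut.conj c) (Q : Subgroup G) hx
  refine smul_eq_iff_mem_normalizer.mp (eq_of_mem_of_mem_of_ne_one_of_inf_eq_bot hTI hcxQ hcx ?_)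
  simpa [conj_eq_one_iff] using hx1

end Sylow

theorem conjClass_inter_eq_normalizer_class_of_TI_general {G : Type*} [Group G] (p : ℕ)
    (hTI : ∀ Q₁ Q₂ : Sylow p G, (Q₁ : Subgroup G) ≠ Q₂ → (Q₁ : Subgroup G) ⊓ Q₂ = ⊥)
    (Q : Sylow p G) (x : G) (hx : x ∈ Q) (hx1 : x ≠ 1) :
    {y : G | IsConj x y} ∩ (Q : Set G) =
      {y : G | ∃ h ∈ Subgroup.normalizer ((Q : Subgroup G) : Set G), h⁻¹ * x * h = y} := by
  ext y
  constructor
  · rintro ⟨hconj, hyQ⟩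
    obtain ⟨c, rfl⟩ := isConj_iff.mp hconj
    have hc := Sylow.mem_normalizer_of_conj_mem_of_inf_eq_bot hTI hx hx1 hyQ
    exact ⟨c⁻¹, inv_mem hc, by group⟩
  · rintro ⟨h, hh, rfl⟩
    exact ⟨isConj_iff.mpr ⟨h⁻¹, by group⟩, (Subgroup.mem_normalizer_iff''.mp hh x).mp hx⟩

/-- In a finite group with trivial-intersection Sylow `p`-subgroups, for a nontrivial
`x ∈ Q` the intersection of the `G`-conjugacy class of `x` with `Q` equals the
`N_G(Q)`-conjugacy class of `x`. -/
theorem conjClass_inter_eq_normalizer_class_of_TI {G : Type*} [Group G] [Finite G] (p : ℕ)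
    [Fact p.Prime]
    (hTI : ∀ Q₁ Q₂ : Sylow p G, (Q₁ : Subgroup G) ≠ Q₂ → (Q₁ : Subgroup G) ⊓ Q₂ = ⊥)
    (Q : Sylow p G) (x : G) (hx : x ∈ Q) (hx1 : x ≠ 1) :
    {y : G | IsConj x y} ∩ (Q : Set G) =
      {y : G | ∃ h ∈ Subgroup.normalizer ((Q : Subgroup G) : Set G), h⁻¹ * x * h = y} :=
  conjClass_inter_eq_normalizer_class_of_TI_general p hTI Q x hx hx1
end

section
/- Let G be a finite group with trivial-intersection Sylow p-subgroups, Q a Sylow p-subgroup, H = N_G(Q), and let x, y, z be nontrivial elements of Q. Then the class algebra structure constants satisfy a_G(x,y,z) ≡ a_H(x,y,z) (mod p^d), where p^d is the p-part of |C_G(z)|. -/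
/-- The class algebra structure constant `a(x,y,z)` of a group `K`. -/
noncomputable def classConst (K : Type*) [Group K] (x y z : K) : ℕ :=
  Nat.card {p : K × K // IsConj x p.1 ∧ IsConj y p.2 ∧ p.1 * p.2 = z}

/-!
Split the pairs `(u, v)` counted by `a_G(x, y, z)` according to whether `u ∈ Q`. If `u ∈ Q`, then
also `v = u⁻¹ z ∈ Q`, and by the TI property an element conjugating a nontrivial element of `Q`
into `Q` normalizes `Q`, so these pairs are exactly those counted by `a_H(x, y, z)`.
A subgroup `P ≤ C_G(z)` of order `|C_G(z)|_p` lies in `Q`, because `P ⟨z⟩` is a `p`-group meeting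
`Q` in `z ≠ 1`. It acts by conjugation on the remaining pairs, and freely: a nontrivial element
of `P` centralizing the `p`-element `u` would force `u ∈ Q`. Hence `|P|` divides their number.
-/

open Subgroup

section

variable {G : Type*} [Group G]

theorem MulAction.card_dvd_ncard_of_free {K α : Type*} [Group K] [MulAction K α] {s : Set α}
    (hs : ∀ k : K, ∀ a ∈ s, k • a ∈ s) (hfree : ∀ k : K, ∀ a ∈ s, k • a = a → k = 1) :
    Nat.card K ∣ s.ncard := by
  let S : SubMulAction K α := ⟨s, fun k _ ha => hs k _ ha⟩
  have hstab : ∀ b : S, stabilizer K b = ⊥ := fun b =>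
    (eq_bot_iff_forall _).mpr fun k hk => hfree k b b.2 (congrArg Subtype.val hk)
  change Nat.card K ∣ Nat.card S
  rw [Nat.card_congr (selfEquivOrbitsQuotientProd hstab), Nat.card_prod]
  exact dvd_mul_left _ _

theorem Subgroup.mem_of_isConj_normalizer {H : Subgroup G} {w : G} (hw : w ∈ H)
    {a : normalizer (H : Set G)} (h : IsConj ⟨w, le_normalizer hw⟩ a) : (a : G) ∈ H := by
  obtain ⟨c, rfl⟩ := isConj_iff.mp h
  exact (mem_normalizer_iff.mp c.2 w).mp hw

theorem IsConj.isPGroup_zpowers {p : ℕ} {x u : G} (h : IsConj x u)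
    (hx : IsPGroup p (zpowers x)) : IsPGroup p (zpowers u) := by
  obtain ⟨c, rfl⟩ := isConj_iff.mp h
  have := hx.map (MulAut.conj c).toMonoidHom
  rwa [MonoidHom.map_zpowers] at this

theorem Subgroup.exists_le_card_eq_pow_factorization [Finite G] (p : ℕ) [Fact p.Prime]
    (H : Subgroup G) : ∃ P ≤ H, Nat.card P = p ^ (Nat.card H).factorization p :=
  let P : Sylow p H := default
  ⟨P.map H.subtype, map_subtype_le _, (card_subtype _ _).trans P.card_eq_multiplicity⟩

def classPairs (K : Type*) [Group K] (x y z : K) : Set (K × K) :=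
  {q | IsConj x q.1 ∧ IsConj y q.2 ∧ q.1 * q.2 = z}

theorem classConst_eq_ncard (K : Type*) [Group K] (x y z : K) :
    classConst K x y z = (classPairs K x y z).ncard :=
  rfl

theorem conj_mem_classPairs {x y z g : G} (hg : g ∈ centralizer {z})
    {q : G × G} (hq : q ∈ classPairs G x y z) :
    (g * q.1 * g⁻¹, g * q.2 * g⁻¹) ∈ classPairs G x y z := by
  obtain ⟨hxu, hyv, huv⟩ := hq
  refine ⟨hxu.trans (isConj_iff.mpr ⟨g, rfl⟩), hyv.trans (isConj_iff.mpr ⟨g, rfl⟩), ?_⟩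
  rw [mem_centralizer_singleton_iff] at hg
  simp only [mul_assoc, inv_mul_cancel_left]
  rw [← mul_assoc q.1, huv, ← mul_assoc, hg, mul_inv_cancel_right]

def SylowTI (p : ℕ) (G : Type*) [Group G] : Prop :=
  ∀ Q₁ Q₂ : Sylow p G, (Q₁ : Subgroup G) ≠ Q₂ → (Q₁ : Subgroup G) ⊓ Q₂ = ⊥

namespace SylowTI

variable {p : ℕ} (hTI : SylowTI p G) (Q : Sylow p G) {c : G}
include hTI

theorem le_of_mem (hc : c ∈ Q) (hc1 : c ≠ 1) {K : Subgroup G} (hK : IsPGroup p K)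
    (hcK : c ∈ K) : K ≤ Q := by
  obtain ⟨R, hKR⟩ := hK.exists_le_sylow
  by_contra hKQ
  have hRQ : (R : Subgroup G) ≠ Q := fun h => hKQ (h ▸ hKR)
  exact hc1 ((mem_bot).mp (hTI R Q hRQ ▸ mem_inf.mpr ⟨hKR hcK, hc⟩))

theorem le_of_le_centralizer (hc : c ∈ Q) (hc1 : c ≠ 1) {K : Subgroup G} (hK : IsPGroup p K)
    (hKc : K ≤ centralizer {c}) : K ≤ Q := by
  have hcp : IsPGroup p (zpowers c) := Q.isPGroup'.to_le (zpowers_le.mpr hc)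
  have hKn : K ≤ normalizer (zpowers c : Set G) := by
    rw [← centralizer_closure, ← zpowers_eq_closure] at hKc
    exact hKc.trans (centralizer_le_normalizer _)
  exact le_sup_left.trans <| hTI.le_of_mem Q hc hc1
    (hK.to_sup_of_normal_right' hcp hKn) (mem_sup_right (mem_zpowers c))

theorem eq_one_of_commute (hc : c ∈ Q) {u : G} (hu : IsPGroup p (zpowers u)) (huQ : u ∉ Q)
    (hcu : Commute c u) : c = 1 := by
  by_contra hc1
  refine huQ (hTI.le_of_le_centralizer Q hc hc1 hu ?_ (mem_zpowers u))
  rw [zpowers_le, mem_centralizer_singleton_iff]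
  exact hcu.eq.symm

theorem mem_normalizer_of_conj_mem {w : G} (hw : w ∈ Q) (hw1 : w ≠ 1) (hcw : c * w * c⁻¹ ∈ Q) :
    c ∈ normalizer (Q : Set G) := by
  by_contra hcN
  have hne : ((c • Q : Sylow p G) : Subgroup G) ≠ Q := fun h =>
    hcN (Sylow.smul_eq_iff_mem_normalizer.mp (Sylow.ext h))
  have hcw' : c * w * c⁻¹ ∈ ((c • Q : Sylow p G) : Subgroup G) :=
    smul_mem_pointwise_smul w (MulAut.conj c) _ hw
  have hcw1 : c * w * c⁻¹ ≠ 1 := by rwa [Ne, mul_inv_eq_one, mul_eq_left]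
  exact hcw1 ((mem_bot).mp (hTI _ Q hne ▸ mem_inf.mpr ⟨hcw', hcw⟩))

theorem isConj_normalizer_iff {w u : G} (hw : w ∈ Q) (hw1 : w ≠ 1) (hu : u ∈ Q) :
    IsConj (⟨w, le_normalizer hw⟩ : normalizer (Q : Set G)) ⟨u, le_normalizer hu⟩ ↔
      IsConj w u := by
  refine ⟨fun h => (normalizer (Q : Set G)).subtype.map_isConj h, fun h => ?_⟩
  obtain ⟨c, rfl⟩ := isConj_iff.mp h
  exact isConj_iff.mpr ⟨⟨c, hTI.mem_normalizer_of_conj_mem Q hw hw1 hu⟩, rfl⟩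

theorem ncard_classPairs_inter_eq_classConst_normalizer {x y z : G} (hx : x ∈ Q) (hx1 : x ≠ 1)
    (hy : y ∈ Q) (hy1 : y ≠ 1) (hz : z ∈ Q) :
    (classPairs G x y z ∩ {q | q.1 ∈ Q}).ncard =
      classConst (normalizer (Q : Set G)) ⟨x, le_normalizer hx⟩ ⟨y, le_normalizer hy⟩
        ⟨z, le_normalizer hz⟩ := by
  rw [classConst_eq_ncard, ← Set.ncard_image_of_injective _
    (Prod.map_injective.mpr ⟨Subtype.val_injective, Subtype.val_injective⟩)]
  congr 1
  ext q
  constructor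
  · rintro ⟨⟨hxu, hyv, huv⟩, hu : q.1 ∈ Q⟩
    have hv : q.2 ∈ Q := by
      rw [eq_inv_mul_of_mul_eq huv]
      exact mul_mem (inv_mem hu) hz
    exact ⟨(⟨q.1, le_normalizer hu⟩, ⟨q.2, le_normalizer hv⟩),
      ⟨(hTI.isConj_normalizer_iff Q hx hx1 hu).mpr hxu,
        (hTI.isConj_normalizer_iff Q hy hy1 hv).mpr hyv, Subtype.ext huv⟩, rfl⟩
  · rintro ⟨q, ⟨hxu, hyv, huv⟩, rfl⟩
    exact ⟨⟨(normalizer (Q : Set G)).subtype.map_isConj hxu,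
      (normalizer (Q : Set G)).subtype.map_isConj hyv, congrArg Subtype.val huv⟩,
      mem_of_isConj_normalizer hx hxu⟩

theorem card_dvd_ncard_classPairs_sdiff {P : Subgroup G} (hPQ : P ≤ Q) {x y z : G}
    (hPz : P ≤ centralizer {z}) (hx : x ∈ Q) :
    Nat.card P ∣ (classPairs G x y z \ {q | q.1 ∈ Q}).ncard := by
  rw [← card_map_of_injective (f := (ConjAct.toConjAct : G ≃* ConjAct G).toMonoidHom)
    ConjAct.toConjAct.injective]
  apply MulAction.card_dvd_ncard_of_free
  · rintro ⟨_, g, hg, rfl⟩ q ⟨hq, hq1⟩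
    change (g * q.1 * g⁻¹, g * q.2 * g⁻¹) ∈ _ \ _
    refine ⟨conj_mem_classPairs (hPz hg) hq, fun hgq => hq1 ?_⟩
    exact show q.1 ∈ (Q : Subgroup G) by
      simpa [mul_assoc] using mul_mem (mul_mem (inv_mem (hPQ hg)) hgq) (hPQ hg)
  · rintro ⟨_, g, hg, rfl⟩ q ⟨hq, hq1⟩ hgq
    have hcomm : Commute g q.1 := mul_inv_eq_iff_eq_mul.mp (congrArg Prod.fst hgq)
    have hu : IsPGroup p (zpowers q.1) :=
      hq.1.isPGroup_zpowers (Q.isPGroup'.to_le (zpowers_le.mpr hx))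
    obtain rfl := hTI.eq_one_of_commute Q (hPQ hg) hu hq1 hcomm
    exact Subtype.ext (map_one _)

end SylowTI

end

/-- For a finite group with trivial-intersection Sylow `p`-subgroups, `Q` a Sylow
`p`-subgroup, `H = N_G(Q)` and nontrivial `x, y, z ∈ Q`, one has
`a_G(x,y,z) ≡ a_H(x,y,z) mod |C_G(z)|_p`. -/
theorem classConst_congr_normalizer_of_TI {G : Type*} [Group G] [Finite G] (p : ℕ)
    [Fact p.Prime]
    (hTI : ∀ Q₁ Q₂ : Sylow p G, (Q₁ : Subgroup G) ≠ Q₂ → (Q₁ : Subgroup G) ⊓ Q₂ = ⊥)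
    (Q : Sylow p G) (x y z : G) (hx : x ∈ Q) (hy : y ∈ Q) (hz : z ∈ Q)
    (hx1 : x ≠ 1) (hy1 : y ≠ 1) (hz1 : z ≠ 1) :
    classConst G x y z ≡
      classConst (Subgroup.normalizer ((Q : Subgroup G) : Set G))
        ⟨x, Subgroup.le_normalizer hx⟩ ⟨y, Subgroup.le_normalizer hy⟩
        ⟨z, Subgroup.le_normalizer hz⟩
      [MOD p ^ ((Nat.card (Subgroup.centralizer {z})).factorization p)] := by
  obtain ⟨P, hPz, hPcard⟩ := exists_le_card_eq_pow_factorization p (centralizer {z})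
  have hPQ : P ≤ Q := SylowTI.le_of_le_centralizer hTI Q hz hz1 (IsPGroup.of_card hPcard) hPz
  rw [classConst_eq_ncard G, ← Set.ncard_inter_add_ncard_sdiff_eq_ncard _ {q : G × G | q.1 ∈ Q},
    SylowTI.ncard_classPairs_inter_eq_classConst_normalizer hTI Q hx hx1 hy hy1 hz, ← hPcard]
  exact (Nat.left_modEq_add_iff.mpr
    (SylowTI.card_dvd_ncard_classPairs_sdiff hTI Q hPQ hPz hx)).symm
end

section
/- Let G be a finite group with trivial-intersection Sylow p-subgroups, Q ∈ Syl_p(G), z ∈ Q \ {1}, and let x' = x^g for some x ∈ Q \ {1} with g ∉ N_G(Q). Then p does not divide |C_G(z) ∩ C_G(x')|. -/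
/-! An element `t` of order `p` centralizing both `z ∈ Q` and `x' ∈ Q^g` must lie in both `Q`
and `Q^g`, because in a TI group a Sylow subgroup contains every `p`-subgroup centralizing one
of its nontrivial elements. Then `Q` and `Q^g` share `t ≠ 1`, so `Q^g = Q` and `g ∈ N_G(Q)`. -/

open Subgroup Pointwise

namespace Sylow

variable {G : Type*} [Group G] {p : ℕ}

theorem eq_of_mem_of_mem_of_TI
    (hTI : ∀ Q₁ Q₂ : Sylow p G, (Q₁ : Subgroup G) ≠ Q₂ → (Q₁ : Subgroup G) ⊓ Q₂ = ⊥)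
    {P₁ P₂ : Sylow p G} {w : G} (h₁ : w ∈ P₁) (h₂ : w ∈ P₂) (hw : w ≠ 1) : P₁ = P₂ := by
  by_contra hne
  have : w ∈ (P₁ : Subgroup G) ⊓ P₂ := mem_inf.mpr ⟨h₁, h₂⟩
  rw [hTI P₁ P₂ fun h ↦ hne (Sylow.ext h), mem_bot] at this
  exact hw this

/-- `⟨w⟩` and `H` generate a `p`-group, whose Sylow overgroup meets `P` in `w ≠ 1`. -/
theorem le_of_le_centralizer_of_TI
    (hTI : ∀ Q₁ Q₂ : Sylow p G, (Q₁ : Subgroup G) ≠ Q₂ → (Q₁ : Subgroup G) ⊓ Q₂ = ⊥)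
    (P : Sylow p G) {H : Subgroup G} (hH : IsPGroup p H) {w : G} (hw : w ∈ P) (hw1 : w ≠ 1)
    (hHw : H ≤ centralizer {w}) : H ≤ P := by
  have hwP : IsPGroup p (zpowers w) := P.isPGroup'.to_le (zpowers_le.mpr hw)
  have hnorm : H ≤ normalizer (zpowers w : Set G) := by
    rw [← centralizer_closure, ← zpowers_eq_closure] at hHw
    exact hHw.trans (centralizer_le_normalizer _)
  obtain ⟨P', hP'⟩ := (hwP.to_sup_of_normal_left' hH hnorm).exists_le_sylow
  have hPP' : P' = P :=
    eq_of_mem_of_mem_of_TI hTI (hP' (le_sup_left (a := zpowers w) (mem_zpowers w))) hw hw1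
  exact hPP' ▸ le_sup_right.trans hP'

end Sylow

/-- Let `G` have trivial-intersection Sylow `p`-subgroups, `Q ∈ Syl_p(G)`,
`z, x ∈ Q \ {1}`, and `x' = g⁻¹xg` with `g ∉ N_G(Q)`. Then `p` does not divide
`|C_G(z) ∩ C_G(x')|`. -/
theorem not_dvd_card_centralizer_inter_of_TI {G : Type*} [Group G] [Finite G] (p : ℕ)
    [Fact p.Prime]
    (hTI : ∀ Q₁ Q₂ : Sylow p G, (Q₁ : Subgroup G) ≠ Q₂ → (Q₁ : Subgroup G) ⊓ Q₂ = ⊥)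
    (Q : Sylow p G) (z x : G) (hz : z ∈ Q) (hz1 : z ≠ 1) (hx : x ∈ Q) (hx1 : x ≠ 1)
    (g : G) (hg : g ∉ Subgroup.normalizer ((Q : Subgroup G) : Set G)) :
    ¬ p ∣ Nat.card (Subgroup.centralizer {z} ⊓ Subgroup.centralizer {g⁻¹ * x * g} :
      Subgroup G) := by
  intro hdvd
  obtain ⟨t, ht⟩ := exists_prime_orderOf_dvd_card' p hdvd
  have ht1 : (t : G) ≠ 1 := by
    rw [Ne, ← orderOf_eq_one_iff, orderOf_coe, ht]
    exact (Fact.out : p.Prime).ne_one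
  have hH : IsPGroup p (zpowers (t : G)) :=
    IsPGroup.of_card (by rw [Nat.card_zpowers, orderOf_coe, ht, pow_one])
  have hx' : g⁻¹ * x * g ∈ g⁻¹ • Q := by
    change _ ∈ MulAut.conj g⁻¹ • (Q : Subgroup G)
    simpa [MulAut.smul_def] using smul_mem_pointwise_smul x (MulAut.conj g⁻¹) (Q : Subgroup G) hx
  have hx'1 : g⁻¹ * x * g ≠ 1 := by simpa using (conj_eq_one_iff (a := g⁻¹)).not.mpr hx1
  have htQ := Q.le_of_le_centralizer_of_TI hTI hH hz hz1 (zpowers_le.mpr (mem_inf.mp t.2).1)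
  have htQ' := (g⁻¹ • Q).le_of_le_centralizer_of_TI hTI hH hx' hx'1
    (zpowers_le.mpr (mem_inf.mp t.2).2)
  have hQ : g⁻¹ • Q = Q :=
    Sylow.eq_of_mem_of_mem_of_TI hTI (htQ' (mem_zpowers _)) (htQ (mem_zpowers _)) ht1
  exact hg (by simpa using inv_mem (Sylow.smul_eq_iff_mem_normalizer.mp hQ))
end

section
/- Let q = 3^{2k+1} with k ≥ 1. Then the equation w^{2−3·3^k} = 1 has the unique solution w = 1 in F_q^×; equivalently, gcd(3^{k+1} − 2, q − 1) = 1. -/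
/-- In `F_q^×` with `q = 3^(2k+1)`, the equation `w^(3^(k+1) − 2) = 1` has the unique
solution `w = 1`; equivalently `gcd(3^(k+1) − 2, q − 1) = 1`. -/
theorem pow_two_sub_three_theta_eq_one_iff (k : ℕ) (hk : 1 ≤ k) :
    (∀ w : (GaloisField 3 (2 * k + 1))ˣ, w ^ (3 ^ (k + 1) - 2) = 1 ↔ w = 1) ∧
      Nat.gcd (3 ^ (k + 1) - 2) (3 ^ (2 * k + 1) - 1) = 1 := by
  have h2 : (2 : ℕ) ≤ 3 ^ (k + 1) := by
    calc (2:ℕ) ≤ 3 ^ 1 := by norm_num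
    _ ≤ 3 ^ (k+1) := Nat.pow_le_pow_right (by norm_num) (by omega)
  have h1 : (1 : ℕ) ≤ 3 ^ (2 * k + 1) := Nat.one_le_pow _ _ (by norm_num)
  have hgcd : Nat.gcd (3 ^ (k + 1) - 2) (3 ^ (2 * k + 1) - 1) = 1 := by
    set g := Nat.gcd (3 ^ (k + 1) - 2) (3 ^ (2 * k + 1) - 1) with hg
    have ha : (g:ℤ) ∣ (3 ^ (k + 1) - 2 : ℤ) := by
      have := Nat.gcd_dvd_left (3 ^ (k + 1) - 2) (3 ^ (2 * k + 1) - 1)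
      have := Int.natCast_dvd_natCast.mpr this
      push_cast [h2] at this
      exact this
    have hb : (g:ℤ) ∣ (3 ^ (2 * k + 1) - 1 : ℤ) := by
      have := Nat.gcd_dvd_right (3 ^ (k + 1) - 2) (3 ^ (2 * k + 1) - 1)
      have := Int.natCast_dvd_natCast.mpr this
      push_cast [h1] at this
      exact this
    have hone : (g:ℤ) ∣ 1 := by
      have : (1:ℤ) = 3 * (3 ^ (2 * k + 1) - 1) - (3 ^ (k + 1) + 2) * (3 ^ (k + 1) - 2) := by
        ring
      rw [this]
      exact dvd_sub (Dvd.dvd.mul_left hb 3) (Dvd.dvd.mul_left ha _)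
    exact_mod_cast Int.eq_one_of_dvd_one (by positivity) hone
  refine ⟨fun w => ⟨fun hw => ?_, fun hw => by simp [hw]⟩, hgcd⟩
  have hcard : Nat.card (GaloisField 3 (2 * k + 1))ˣ = 3 ^ (2 * k + 1) - 1 := by
    rw [Nat.card_units, GaloisField.card 3 (2 * k + 1) (by omega)]
  have hd1 : orderOf w ∣ 3 ^ (k + 1) - 2 := orderOf_dvd_of_pow_eq_one hw
  have hd2 : orderOf w ∣ 3 ^ (2 * k + 1) - 1 := hcard ▸ orderOf_dvd_natCard w
  have hdg := Nat.dvd_gcd hd1 hd2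
  rw [hgcd] at hdg
  have hone : orderOf w = 1 := Nat.eq_one_of_dvd_one hdg
  exact orderOf_eq_one_iff.mp hone
end

section
/- Let N be a finite group with a normal Sylow p-subgroup P and cyclic complement W of order coprime to p, and suppose μ is an irreducible complex character of N and w ∈ W is an element whose centralizer in N equals W. If the linear characters of N inflated from N/P ≅ W take at least deg(μ)+1 distinct values at the image of w, then μ vanishes on the coset of w unless μ is linear. (Concretely, in N = P ⋊ C_{q−1} = N_G(P) for G = ²G₂(q): if w_j ∈ F_q^×, w_j ≠ ±1, then every nonlinear irreducible character of N vanishes on the conjugacy class P·h(w_j).) -/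
/-!
Since `P ∩ C_N(w) = 1`, the map `y ↦ y w y⁻¹ w⁻¹` is injective on `P`, hence onto, so every
element of `P w` is `P`-conjugate to `w` and `|P| μ(w) = tr ((∑_{x ∈ P} ρ x) ρ w)`. As `P` is
normal, `∑_{x ∈ P} ρ x` is an endomorphism of `μ`, hence a scalar `c` by Schur, and `ρ x * c = c`
for `x ∈ P`. Either `c = 0` and `μ(w) = 0`, or `P` acts trivially; then `N` acts through the
abelian complement `W`, all `ρ g` commute, and Schur again forces `μ` to be linear.
-/

open CategoryTheory

namespace Subgroup

variable {G : Type*} [Group G] {P : Subgroup G} {w : G}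

theorem isConj_mul_of_disjoint_centralizer [Finite P] [hP : P.Normal]
    (hdisj : Disjoint P (centralizer {w})) {x : G} (hx : x ∈ P) : IsConj w (x * w) := by
  let f : P → P := fun y =>
    ⟨y * (w * (y : G)⁻¹ * w⁻¹), mul_mem y.2 (hP.conj_mem _ (inv_mem y.2) w)⟩
  have hf : Function.Injective f := by
    intro y₁ y₂ h
    have h' : (y₁ : G) * w * (y₁ : G)⁻¹ = y₂ * w * (y₂ : G)⁻¹ := by
      simpa [f, mul_assoc] using congrArg (fun z : P => (z : G) * w) h
    have hcomm : (y₂ : G)⁻¹ * y₁ ∈ centralizer {w} := by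
      rw [mem_centralizer_singleton_iff]
      calc (y₂ : G)⁻¹ * y₁ * w = (y₂ : G)⁻¹ * (y₁ * w * (y₁ : G)⁻¹) * y₁ := by group
        _ = w * ((y₂ : G)⁻¹ * y₁) := by rw [h']; group
    have := disjoint_def.mp hdisj (mul_mem (inv_mem y₂.2) y₁.2) hcomm
    exact (Subtype.ext (inv_mul_eq_one.mp this)).symm
  obtain ⟨y, hy⟩ := (Finite.injective_iff_surjective.mp hf) ⟨x, hx⟩
  have hy' : (y : G) * (w * (y : G)⁻¹ * w⁻¹) = x := congrArg Subtype.val hy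
  exact isConj_iff.mpr ⟨y, by rw [← hy']; group⟩

end Subgroup

namespace Representation

variable {k G V : Type*} [CommSemiring k] [Group G] [AddCommMonoid V] [Module k V]
  (ρ : Representation k G V) {P : Subgroup G}

theorem commute_sum_subgroup [Fintype P] [P.Normal] (g : G) :
    Commute (∑ x : P, ρ x) (ρ g) := by
  simp only [Commute, SemiconjBy, Finset.mul_sum, Finset.sum_mul, ← map_mul]
  exact Fintype.sum_equiv (MulAut.conjNormal g⁻¹).toEquiv _ _ fun x =>
    congrArg ρ (by simp [mul_assoc])

theorem mul_sum_subgroup [Fintype P] {x : G} (hx : x ∈ P) :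
    ρ x * ∑ y : P, ρ y = ∑ y : P, ρ y := by
  simp only [Finset.mul_sum, ← map_mul]
  exact Fintype.sum_equiv (Equiv.mulLeft ⟨x, hx⟩) _ _ fun y => rfl

open scoped IsMulCommutative in
theorem commute_of_isComplement' {W : Subgroup G} (hPW : P.IsComplement' W)
    [IsMulCommutative W] (hP : ∀ x ∈ P, ρ x = 1) (g h : G) : Commute (ρ g) (ρ h) := by
  have hW : ∀ g, ∃ u : W, ρ g = ρ u := fun g => by
    obtain ⟨⟨x, u⟩, hxu⟩ := hPW.2 g
    exact ⟨u, by rw [← hxu, map_mul, hP x x.2, one_mul]⟩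
  obtain ⟨u, hu⟩ := hW g
  obtain ⟨v, hv⟩ := hW h
  rw [hu, hv]
  exact (Commute.all u v).map (ρ.comp W.subtype)

end Representation

namespace FDRep

open Module

universe u v

variable {k : Type u} {G : Type v} [Field k]

section Monoid

variable [Monoid G] (V : FDRep k G) [Simple V]

theorem finrank_pos_of_simple : 0 < finrank k V := by
  by_contra! h
  have : Subsingleton V := finrank_zero_iff.mp (Nat.le_zero.mp h)
  exact id_nonzero V (Action.hom_ext _ _ (FGModuleCat.hom_ext (LinearMap.ext fun _ =>
    Subsingleton.elim _ _)))

variable [IsAlgClosed k]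

theorem exists_eq_smul_one_of_forall_commute (f : V →ₗ[k] V) (hf : ∀ g, Commute f (V.ρ g)) :
    ∃ c : k, f = c • 1 := by
  let φ : V ⟶ V := ⟨ObjectProperty.homMk (ModuleCat.ofHom f), fun g => by
    ext v; exact LinearMap.congr_fun (hf g) v⟩
  obtain ⟨c, hc⟩ := endomorphism_simple_eq_smul_id k φ
  exact ⟨c, (congrArg (fun φ : V ⟶ V => φ.hom.hom.hom) hc).symm⟩

theorem finrank_eq_one_of_forall_commute (hV : ∀ g h, Commute (V.ρ g) (V.ρ h)) :
    finrank k V = 1 := by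
  have hscalar : ∀ g, ∃ c : k, V.ρ g = c • 1 := fun g =>
    V.exists_eq_smul_one_of_forall_commute _ (hV g)
  have hsurj : Function.Surjective (Algebra.linearMap k (Module.End k V)) := fun f => by
    obtain ⟨c, hc⟩ := V.exists_eq_smul_one_of_forall_commute f fun g => by
      obtain ⟨a, ha⟩ := hscalar g
      rw [ha]
      exact (Commute.one_right f).smul_right a
    exact ⟨c, by rw [hc, Algebra.linearMap_apply, Algebra.algebraMap_eq_smul_one]⟩
  have hle := LinearMap.finrank_le_finrank_of_surjective hsurj
  rw [finrank_linearMap, finrank_self] at hle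
  have := V.finrank_pos_of_simple
  nlinarith

end Monoid

section Group

variable [Group G] (V : FDRep k G) {P : Subgroup G} [Fintype P]

theorem forall_eq_one_or_sum_eq_zero [IsAlgClosed k] [Simple V] [P.Normal] :
    (∀ x ∈ P, V.ρ x = 1) ∨ ∑ x : P, V.ρ x = 0 := by
  obtain ⟨c, hc⟩ :=
    V.exists_eq_smul_one_of_forall_commute _ (Representation.commute_sum_subgroup V.ρ (P := P))
  rcases eq_or_ne c 0 with rfl | hc0
  · exact Or.inr (by rw [hc, zero_smul])
  · refine Or.inl fun x hx => smul_right_injective _ hc0 ?_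
    have := Representation.mul_sum_subgroup V.ρ hx
    rwa [hc, mul_smul_comm, mul_one] at this

theorem char_eq_zero_of_sum_eq_zero [CharZero k] (hP : ∑ x : P, V.ρ x = 0) {g : G}
    (hg : ∀ x ∈ P, V.character (x * g) = V.character g) : V.character g = 0 := by
  have hsum : Fintype.card P • V.character g = 0 :=
    calc Fintype.card P • V.character g = ∑ x : P, V.character (x * g) := by
          simp [hg]
      _ = LinearMap.trace k V ((∑ x : P, V.ρ x) * V.ρ g) := by
          simp [character, Finset.sum_mul, map_sum]
      _ = 0 := by rw [hP, zero_mul, map_zero]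
  exact (smul_eq_zero.mp hsum).resolve_left Fintype.card_ne_zero

end Group

end FDRep

theorem char_vanishes_on_coset_general (p : ℕ) {N : Type} [Group N] [Fintype N]
    (P : Sylow p N) (hPnorm : (P : Subgroup N).Normal)
    (W : Subgroup N) (hcompl : Subgroup.IsComplement' (P : Subgroup N) W)
    (hWcyc : IsCyclic W)
    (μ : FDRep ℂ N) [CategoryTheory.Simple μ]
    (w : N) (hcent : Subgroup.centralizer {w} = W)
    (hnotlin : Module.finrank ℂ μ.V ≠ 1) :
    ∀ x ∈ (P : Subgroup N), μ.character (x * w) = 0 := by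
  classical
  have hconj : ∀ x ∈ (P : Subgroup N), μ.character (x * w) = μ.character w := fun x hx => by
    obtain ⟨y, hy⟩ := isConj_iff.mp
      (Subgroup.isConj_mul_of_disjoint_centralizer (hcent ▸ hcompl.disjoint) hx)
    rw [← hy, FDRep.char_conj]
  rcases μ.forall_eq_one_or_sum_eq_zero (P := P) with htriv | hsum
  · exact absurd (μ.finrank_eq_one_of_forall_commute
      (Representation.commute_of_isComplement' μ.ρ hcompl htriv)) hnotlin
  · intro x hx
    rw [hconj x hx, μ.char_eq_zero_of_sum_eq_zero hsum hconj]

/-- Let `N` be a finite group with normal Sylow `p`-subgroup `P` and cyclic complement `W`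
of order coprime to `p`, `μ` an irreducible complex character of `N`, and `w ∈ W` with
`C_N(w) = W`.  If the linear characters of `N` trivial on `P` take at least `deg μ + 1`
distinct values at `w`, then `μ` vanishes on the coset `P·w` unless `μ` is linear. -/
theorem char_vanishes_on_coset (p : ℕ) [Fact p.Prime] {N : Type} [Group N] [Fintype N]
    (P : Sylow p N) (hPnorm : (P : Subgroup N).Normal)
    (W : Subgroup N) (hcompl : Subgroup.IsComplement' (P : Subgroup N) W)
    (hWcyc : IsCyclic W) (hcop : Nat.Coprime (Nat.card W) p)
    (μ : FDRep ℂ N) [CategoryTheory.Simple μ]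
    (w : N) (hw : w ∈ W) (hcent : Subgroup.centralizer {w} = W)
    (hvals : Module.finrank ℂ μ.V + 1 ≤
      Nat.card {c : ℂ | ∃ α : N →* ℂ, (∀ x ∈ (P : Subgroup N), α x = 1) ∧ α w = c})
    (hnotlin : Module.finrank ℂ μ.V ≠ 1) :
    ∀ x ∈ (P : Subgroup N), μ.character (x * w) = 0 :=
  char_vanishes_on_coset_general p P hPnorm W hcompl hWcyc μ w hcent hnotlin
end
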